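/- For every N ≥ 2, δ·Σ_{u=2}^{N} Σ_{t=2}^{N} 1/(t+u) ≤ δ·∫₁^N ∫₁^N 1/(t+u) dt du ≤ δ·(2N log 2 + 2 log 2), where N = π/(8δ); hence δ·Σ_{u=2}^{π/(8δ)} Σ_{t=2}^{π/(8δ)} 1/(t+u) = O(1) as δ → 0. -/

import Mathlib

/-!
Comparing each decreasing summand with the integral over the unit interval to its left bounds
the double sum by `∫₁^N ∫₁^N dt du/(t+u)`. The inner integral is `log ((N+u)/(1+u))`, and
integrating `log` once more gives `2N log(2N) − 2(N+1) log(N+1) + 2 log 2`, which is at most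
`2N log 2 + 2 log 2` because `x log x` increases. For `N = π/(8δ)` we have `δN = π/8` and
`δ ≤ π/16`, so multiplying by `δ` leaves a bound independent of `δ`.
-/

open Real Finset intervalIntegral

theorem AntitoneOn.sum_Icc_floor_le_integral {f : ℝ → ℝ} {a : ℕ} {b : ℝ} (hab : (a : ℝ) ≤ b)
    (hf : AntitoneOn f (Set.Icc a b)) (hf₀ : ∀ x ∈ Set.Icc (a : ℝ) b, 0 ≤ f x) :
    ∑ k ∈ Icc (a + 1) ⌊b⌋₊, f k ≤ ∫ x in a..b, f x := by
  set M := ⌊b⌋₊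
  have haM : a ≤ M := Nat.le_floor hab
  have hMb : (M : ℝ) ≤ b := Nat.floor_le ((Nat.cast_nonneg a).trans hab)
  have haM' : (a : ℝ) ≤ M := by exact_mod_cast haM
  calc ∑ k ∈ Icc (a + 1) M, f k = ∑ i ∈ Ico a M, f ↑(i + 1) := by
        rw [sum_Ico_add' (fun k : ℕ ↦ f k), ← Finset.Ico_add_one_right_eq_Icc]
    _ ≤ ∫ x in a..M, f x := (hf.mono (Set.Icc_subset_Icc_right hMb)).sum_le_integral_Ico haM
    _ ≤ ∫ x in a..b, f x := by
        refine integral_mono_interval le_rfl haM' hMb ?_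
          (AntitoneOn.intervalIntegrable (Set.uIcc_of_le hab ▸ hf))
        exact (MeasureTheory.ae_restrict_iff' measurableSet_Ioc).2
          (.of_forall fun x hx ↦ hf₀ x (Set.Ioc_subset_Icc_self hx))

theorem integral_one_div_add {a b u : ℝ} (ha : 0 < a + u) (hb : 0 < b + u) :
    ∫ t in a..b, 1 / (t + u) = log ((b + u) / (a + u)) :=
  (integral_comp_add_right (fun x ↦ 1 / x) u).trans (integral_one_div_of_pos ha hb)

theorem integral_log_add (a b c : ℝ) :
    ∫ u in a..b, log (u + c) = (b + c) * log (b + c) - (a + c) * log (a + c) - b + a := by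
  rw [integral_comp_add_right log c, integral_log]
  ring

theorem integral_integral_one_div_add {N : ℝ} (hN : 1 ≤ N) :
    ∫ u in (1 : ℝ)..N, ∫ t in (1 : ℝ)..N, 1 / (t + u)
      = 2 * N * log (2 * N) - 2 * (N + 1) * log (N + 1) + 2 * log 2 := by
  have inner : Set.EqOn (fun u ↦ ∫ t in (1 : ℝ)..N, 1 / (t + u))
      (fun u ↦ log (u + N) - log (u + 1)) (Set.uIcc 1 N) := by
    intro u hu
    rw [Set.uIcc_of_le hN] at hu
    dsimp only
    rw [integral_one_div_add (by linarith [hu.1]) (by linarith [hu.1]),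
      log_div (by linarith [hu.1]) (by linarith [hu.1]), add_comm N, add_comm 1 u]
  have log_shift_integrable : ∀ c : ℝ, 0 < c →
      IntervalIntegrable (fun u ↦ log (u + c)) MeasureTheory.volume 1 N := fun c hc ↦
    ContinuousOn.intervalIntegrable <| (continuousOn_id.add continuousOn_const).log fun u hu ↦ by
      rw [Set.uIcc_of_le hN] at hu
      exact (by linarith [hu.1] : (0 : ℝ) < u + c).ne'
  rw [integral_congr inner, integral_sub (log_shift_integrable N (by linarith))
    (log_shift_integrable 1 one_pos), integral_log_add, integral_log_add,
    show N + N = 2 * N by ring, show (1 : ℝ) + N = N + 1 by ring, one_add_one_eq_two]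
  ring

theorem integral_integral_one_div_add_le {N : ℝ} (hN : 1 ≤ N) :
    ∫ u in (1 : ℝ)..N, ∫ t in (1 : ℝ)..N, 1 / (t + u) ≤ 2 * N * log 2 + 2 * log 2 := by
  have hmono : N * log N ≤ (N + 1) * log (N + 1) :=
    mul_le_mul (by linarith) (log_le_log (by linarith) (by linarith)) (log_nonneg hN)
      (by linarith)
  rw [integral_integral_one_div_add hN, log_mul two_ne_zero (by linarith)]
  nlinarith

theorem sum_Icc_sum_Icc_one_div_add_le {N : ℝ} (hN : 1 ≤ N) :
    ∑ u ∈ Icc 2 ⌊N⌋₊, ∑ t ∈ Icc 2 ⌊N⌋₊, (1 : ℝ) / ((t : ℝ) + u)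
      ≤ ∫ u in (1 : ℝ)..N, ∫ t in (1 : ℝ)..N, 1 / (t + u) := by
  have inner_anti : ∀ u : ℝ, 0 ≤ u → AntitoneOn (fun t ↦ 1 / (t + u)) (Set.Icc 1 N) :=
    fun u hu x hx y _ hxy ↦ one_div_le_one_div_of_le (by linarith [hx.1]) (by linarith)
  have inner_nonneg : ∀ u : ℝ, 0 ≤ u → ∀ t ∈ Set.Icc (1 : ℝ) N, 0 ≤ 1 / (t + u) :=
    fun u hu t ht ↦ one_div_nonneg.2 (by linarith [ht.1])
  have inner_integrable : ∀ u : ℝ, 0 ≤ u →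
      IntervalIntegrable (fun t ↦ 1 / (t + u)) MeasureTheory.volume 1 N := fun u hu ↦
    AntitoneOn.intervalIntegrable (Set.uIcc_of_le hN ▸ inner_anti u hu)
  have outer_anti : AntitoneOn (fun u ↦ ∫ t in (1 : ℝ)..N, 1 / (t + u)) (Set.Icc 1 N) :=
    fun u hu v hv huv ↦ integral_mono_on hN (inner_integrable v (by linarith [hv.1]))
      (inner_integrable u (by linarith [hu.1])) fun t ht ↦
        one_div_le_one_div_of_le (by linarith [ht.1, hu.1]) (by linarith)
  have outer_nonneg : ∀ u ∈ Set.Icc (1 : ℝ) N, 0 ≤ ∫ t in (1 : ℝ)..N, 1 / (t + u) :=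
    fun u hu ↦ integral_nonneg hN (inner_nonneg u (by linarith [hu.1]))
  calc ∑ u ∈ Icc 2 ⌊N⌋₊, ∑ t ∈ Icc 2 ⌊N⌋₊, (1 : ℝ) / ((t : ℝ) + u)
      ≤ ∑ u ∈ Icc 2 ⌊N⌋₊, ∫ t in (1 : ℝ)..N, 1 / (t + (u : ℝ)) := sum_le_sum fun u _ ↦ by
        exact_mod_cast AntitoneOn.sum_Icc_floor_le_integral (f := fun t ↦ 1 / (t + (u : ℝ)))
          (a := 1) (by exact_mod_cast hN) (by exact_mod_cast inner_anti u u.cast_nonneg)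
          (by exact_mod_cast inner_nonneg u u.cast_nonneg)
    _ ≤ ∫ u in (1 : ℝ)..N, ∫ t in (1 : ℝ)..N, 1 / (t + u) := by
        exact_mod_cast AntitoneOn.sum_Icc_floor_le_integral
          (f := fun u ↦ ∫ t in (1 : ℝ)..N, 1 / (t + u)) (a := 1) (by exact_mod_cast hN)
          (by exact_mod_cast outer_anti) (by exact_mod_cast outer_nonneg)

/-- With `N = π/(8δ)`, `δ Σ_{u=2}^{N} Σ_{t=2}^{N} 1/(t+u)` is bounded above by
`δ ∫₁^N ∫₁^N dt du/(t+u)`, which is at most `δ (2N log 2 + 2 log 2)`; hence the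
double sum times `δ` is `O(1)` as `δ → 0`. -/
theorem double_sum_O_one :
    (∀ δ : ℝ, 0 < δ → (2 : ℝ) ≤ π / (8 * δ) →
      δ * ∑ u ∈ Finset.Icc 2 ⌊π / (8 * δ)⌋₊, ∑ t ∈ Finset.Icc 2 ⌊π / (8 * δ)⌋₊,
            (1 : ℝ) / ((t : ℝ) + u)
        ≤ δ * ∫ u in (1:ℝ)..(π / (8 * δ)),
              ∫ t in (1:ℝ)..(π / (8 * δ)), 1 / (t + u) ∧
      δ * (∫ u in (1:ℝ)..(π / (8 * δ)),
              ∫ t in (1:ℝ)..(π / (8 * δ)), 1 / (t + u))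
        ≤ δ * (2 * (π / (8 * δ)) * Real.log 2 + 2 * Real.log 2)) ∧
    ∃ C : ℝ, 0 < C ∧ ∀ δ : ℝ, 0 < δ → (2 : ℝ) ≤ π / (8 * δ) →
      δ * ∑ u ∈ Finset.Icc 2 ⌊π / (8 * δ)⌋₊, ∑ t ∈ Finset.Icc 2 ⌊π / (8 * δ)⌋₊,
            (1 : ℝ) / ((t : ℝ) + u) ≤ C := by
  refine ⟨fun δ hδ hN ↦ ⟨?_, ?_⟩, π * log 2, by positivity, fun δ hδ hN ↦ ?_⟩
  · exact mul_le_mul_of_nonneg_left (sum_Icc_sum_Icc_one_div_add_le (by linarith)) hδ.le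
  · exact mul_le_mul_of_nonneg_left (integral_integral_one_div_add_le (by linarith)) hδ.le
  have hδπ : 16 * δ ≤ π := by
    rw [le_div_iff₀ (by positivity)] at hN
    linarith
  calc _ ≤ δ * (2 * (π / (8 * δ)) * log 2 + 2 * log 2) :=
        mul_le_mul_of_nonneg_left ((sum_Icc_sum_Icc_one_div_add_le (by linarith)).trans
          (integral_integral_one_div_add_le (by linarith))) hδ.le
    _ = (π / 4 + 2 * δ) * log 2 := by field_simp; ring
    _ ≤ π * log 2 := by gcongr; linarith [pi_pos]
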